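/- arXiv:2103.03843 — 2 statements merged into one kernel-verified Lean document; each statement's English description precedes it below -/
import Mathlib

section
/- Let U ⊆ ℝ³ be an open set and let d : U → ℝ be a C² function satisfying the eikonal equation ‖∇d(x)‖ = 1 for all x ∈ U. Let x ∈ U and t ∈ ℝ be such that the closed segment {x + s∇d(x) : s between 0 and t} is contained in U. Then ∇d(x + t∇d(x)) = ∇d(x) and d(x + t∇d(x)) = d(x) + t. In particular, if the segment from x to π(x) := x − d(x)∇d(x) lies in U, then d(π(x)) = 0 and ∇d(π(x)) = ∇d(x), so that x = π(x) + d(x)·n(π(x)) with n := ∇d. -/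
noncomputable section

/-- `ℝ³` as a Euclidean space. -/
abbrev E3 := EuclideanSpace ℝ (Fin 3)

/-!
Differentiating the eikonal equation `‖∇d‖² = 1` gives `⟪D²d w, ∇d⟫ = 0`, and by symmetry of
the Hessian `D²d (∇d) = 0`. Along the segment `γ s = x + s n` with `n = ∇d x`, the defect
`p s = ‖∇d (γ s) - n‖²` therefore has derivative `-2 ⟪D²d (∇d γ - n), ∇d γ - n⟫`, which is
bounded by a multiple of `p`; as `p 0 = 0`, Grönwall forces `p ≡ 0`. Hence `∇d` is constant on
the segment, `d ∘ γ` has slope `‖n‖² = 1`, and replacing `d` by `-d` handles `t < 0`.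
-/

open Set InnerProductSpace
open scoped RealInnerProductSpace

theorem eq_zero_of_abs_deriv_le_mul_abs {p p' : ℝ → ℝ} {K a b : ℝ}
    (hp : ∀ s ∈ Icc a b, HasDerivAt p (p' s) s)
    (hbound : ∀ s ∈ Icc a b, |p' s| ≤ K * |p s|) (ha : p a = 0) :
    ∀ s ∈ Icc a b, p s = 0 := by
  intro s hs
  have h := norm_le_gronwallBound_of_norm_deriv_right_le (δ := 0) (ε := 0)
    (fun r hr => (hp r hr).continuousAt.continuousWithinAt)
    (fun r hr => (hp r (Ico_subset_Icc_self hr)).hasDerivWithinAt)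
    (by simp [ha]) (fun r hr => by simpa using hbound r (Ico_subset_Icc_self hr)) s hs
  rw [gronwallBound_ε0_δ0] at h
  exact norm_le_zero_iff.mp h

section Eikonal

variable {E : Type*} [NormedAddCommGroup E] [InnerProductSpace ℝ E] [CompleteSpace E]
  {U : Set E} {d : E → ℝ}

theorem gradient_neg (d : E → ℝ) (x : E) : gradient (-d) x = -gradient d x := by
  simp [gradient, fderiv_neg]

theorem ContDiffOn.gradient_of_isOpen {m n : WithTop ℕ∞} (hd : ContDiffOn ℝ n d U)
    (hU : IsOpen U) (hmn : m + 1 ≤ n) : ContDiffOn ℝ m (gradient d) U :=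
  (toDual ℝ E).symm.contDiff.comp_contDiffOn (hd.fderiv_of_isOpen hU hmn)

theorem inner_fderiv_gradient_apply (d : E → ℝ) (y w z : E) :
    ⟪fderiv ℝ (gradient d) y w, z⟫ = fderiv ℝ (fderiv ℝ d) y w z := by
  change ⟪fderiv ℝ ((toDual ℝ E).symm ∘ fderiv ℝ d) y w, z⟫ = _
  rw [LinearIsometryEquiv.comp_fderiv]
  exact toDual_symm_apply

theorem inner_fderiv_gradient_comm (hU : IsOpen U) (hd : ContDiffOn ℝ 2 d U) {y : E}
    (hy : y ∈ U) (w z : E) :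
    ⟪fderiv ℝ (gradient d) y w, z⟫ = ⟪fderiv ℝ (gradient d) y z, w⟫ := by
  rw [inner_fderiv_gradient_apply, inner_fderiv_gradient_apply]
  exact ((hd.contDiffAt (hU.mem_nhds hy)).isSymmSndFDerivAt (by simp)).eq w z

theorem hasFDerivAt_gradient (hU : IsOpen U) (hd : ContDiffOn ℝ 2 d U) {y : E} (hy : y ∈ U) :
    HasFDerivAt (gradient d) (fderiv ℝ (gradient d) y) y :=
  ((hd.gradient_of_isOpen (m := 1) hU (by norm_num)).differentiableOn one_ne_zero
    |>.differentiableAt (hU.mem_nhds hy)).hasFDerivAt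

theorem inner_fderiv_gradient_gradient_eq_zero (hU : IsOpen U) (hd : ContDiffOn ℝ 2 d U)
    (heik : ∀ x ∈ U, ‖gradient d x‖ = 1) {y : E} (hy : y ∈ U) (w : E) :
    ⟪fderiv ℝ (gradient d) y w, gradient d y⟫ = 0 := by
  have hconst : (‖gradient d ·‖ ^ 2) =ᶠ[nhds y] fun _ => (1 : ℝ) := by
    filter_upwards [hU.mem_nhds hy] with z hz
    rw [heik z hz, one_pow]
  have hzero := ContinuousLinearMap.ext_iff.mp
    ((hasFDerivAt_gradient hU hd hy).norm_sq.unique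
      ((hasFDerivAt_const 1 y).congr_of_eventuallyEq hconst)) w
  simp only [ContinuousLinearMap.comp_apply, innerSL_apply_apply,
    smul_apply, zero_apply, smul_eq_zero, two_ne_zero, false_or] at hzero
  rwa [real_inner_comm]

/-- Integral curves of `∇d` are straight lines. -/
theorem fderiv_gradient_apply_gradient_eq_zero (hU : IsOpen U) (hd : ContDiffOn ℝ 2 d U)
    (heik : ∀ x ∈ U, ‖gradient d x‖ = 1) {y : E} (hy : y ∈ U) :
    fderiv ℝ (gradient d) y (gradient d y) = 0 := by
  rw [← inner_self_eq_zero (𝕜 := ℝ), inner_fderiv_gradient_comm hU hd hy]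
  exact inner_fderiv_gradient_gradient_eq_zero hU hd heik hy _

theorem gradient_add_smul_gradient_eq (hU : IsOpen U) (hd : ContDiffOn ℝ 2 d U)
    (heik : ∀ x ∈ U, ‖gradient d x‖ = 1) {x : E} {t : ℝ}
    (hseg : ∀ s ∈ Icc 0 t, x + s • gradient d x ∈ U) :
    ∀ s ∈ Icc 0 t, gradient d (x + s • gradient d x) = gradient d x := by
  set n := gradient d x
  set B : ℝ → E →L[ℝ] E := fun s => fderiv ℝ (gradient d) (x + s • n)
  have hB : ContinuousOn B (Icc 0 t) :=
    ((hd.gradient_of_isOpen (m := 1) hU (by norm_num)).continuousOn_fderiv_of_isOpen hU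
      le_rfl).comp (by fun_prop) hseg
  obtain ⟨C, hC⟩ := isCompact_Icc.exists_bound_of_continuousOn hB
  set v : ℝ → E := fun s => gradient d (x + s • n) - n
  have hv : ∀ s ∈ Icc 0 t, HasDerivAt v (B s n) s := fun s hs => by
    have hγ : HasDerivAt (fun s : ℝ => x + s • n) n s := by
      simpa using ((hasDerivAt_id s).smul_const n).const_add x
    exact ((hasFDerivAt_gradient hU hd (hseg s hs)).comp_hasDerivAt s hγ).sub_const n
  have hBv : ∀ s ∈ Icc 0 t, B s n = -B s (v s) := fun s hs => by
    simp [v, map_sub, fderiv_gradient_apply_gradient_eq_zero hU hd heik (hseg s hs), B]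
  have hbound : ∀ s ∈ Icc 0 t, |2 * ⟪v s, B s n⟫| ≤ 2 * C * |‖v s‖ ^ 2| := fun s hs => by
    rw [hBv s hs, inner_neg_right, mul_neg, abs_neg, abs_mul, abs_two, abs_sq, mul_assoc, sq]
    gcongr
    calc |⟪v s, B s (v s)⟫| ≤ ‖v s‖ * ‖B s (v s)‖ := abs_real_inner_le_norm _ _
      _ ≤ ‖v s‖ * (‖B s‖ * ‖v s‖) := by gcongr; exact (B s).le_opNorm _
      _ ≤ C * (‖v s‖ * ‖v s‖) := by nlinarith [hC s hs, norm_nonneg (v s)]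
  have hvanish := eq_zero_of_abs_deriv_le_mul_abs (fun s hs => (hv s hs).norm_sq) hbound
    (by simp [v, n])
  intro s hs
  simpa [v, sub_eq_zero] using hvanish s hs

theorem apply_add_smul_gradient (hU : IsOpen U) (hd : ContDiffOn ℝ 2 d U)
    (heik : ∀ x ∈ U, ‖gradient d x‖ = 1) {x : E} {t : ℝ} (ht : 0 ≤ t)
    (hseg : ∀ s ∈ Icc 0 t, x + s • gradient d x ∈ U) :
    d (x + t • gradient d x) = d x + t := by
  have hn : ‖gradient d x‖ = 1 := by simpa using heik _ (hseg 0 ⟨le_rfl, ht⟩)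
  have hderiv : ∀ s ∈ Icc 0 t,
      HasDerivAt (fun s => d (x + s • gradient d x) - s) 0 s := fun s hs => by
    have hγ : HasDerivAt (fun s : ℝ => x + s • gradient d x) (gradient d x) s := by
      simpa using ((hasDerivAt_id s).smul_const (gradient d x)).const_add x
    have hd' := ((hd.contDiffAt (hU.mem_nhds (hseg s hs))).differentiableAt
      (by norm_num)).hasGradientAt
    rw [gradient_add_smul_gradient_eq hU hd heik hseg s hs] at hd'
    have h := (hd'.hasFDerivAt.comp_hasDerivAt s hγ).sub (hasDerivAt_id s)
    rwa [Function.comp_def, toDual_apply_apply, real_inner_self_eq_norm_sq, hn, one_pow,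
      sub_self] at h
  have hconst := constant_of_has_deriv_right_zero
    (fun s hs => (hderiv s hs).continuousAt.continuousWithinAt)
    (fun s hs => (hderiv s (Ico_subset_Icc_self hs)).hasDerivWithinAt) t ⟨ht, le_rfl⟩
  simp only [zero_smul, add_zero, sub_zero] at hconst
  linarith

theorem gradient_eq_and_apply_eq_of_nonneg (hU : IsOpen U) (hd : ContDiffOn ℝ 2 d U)
    (heik : ∀ x ∈ U, ‖gradient d x‖ = 1) {x : E} {t : ℝ} (ht : 0 ≤ t)
    (hseg : ∀ s ∈ Icc 0 t, x + s • gradient d x ∈ U) :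
    gradient d (x + t • gradient d x) = gradient d x ∧ d (x + t • gradient d x) = d x + t :=
  ⟨gradient_add_smul_gradient_eq hU hd heik hseg t ⟨ht, le_rfl⟩,
    apply_add_smul_gradient hU hd heik ht hseg⟩

theorem gradient_eq_and_apply_eq (hU : IsOpen U) (hd : ContDiffOn ℝ 2 d U)
    (heik : ∀ x ∈ U, ‖gradient d x‖ = 1) {x : E} {t : ℝ}
    (hseg : ∀ s ∈ uIcc 0 t, x + s • gradient d x ∈ U) :
    gradient d (x + t • gradient d x) = gradient d x ∧ d (x + t • gradient d x) = d x + t := by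
  rcases le_total 0 t with ht | ht
  · exact gradient_eq_and_apply_eq_of_nonneg hU hd heik ht (by rwa [← uIcc_of_le ht])
  · have hseg' : ∀ s ∈ Icc 0 (-t), x + s • gradient (-d) x ∈ U := fun s hs => by
      rw [gradient_neg, smul_neg, ← neg_smul]
      exact hseg _ (by rw [uIcc_of_ge ht]; constructor <;> linarith [hs.1, hs.2])
    have heik' : ∀ x ∈ U, ‖gradient (-d) x‖ = 1 := fun x hx => by
      rw [gradient_neg, norm_neg, heik x hx]
    obtain ⟨hgrad, hval⟩ :=
      gradient_eq_and_apply_eq_of_nonneg (d := -d) hU hd.neg heik' (neg_nonneg.mpr ht) hseg'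
    simp only [gradient_neg, neg_smul_neg, neg_inj, Pi.neg_apply] at hgrad hval
    exact ⟨hgrad, by linarith⟩

end Eikonal

/-- Let `U ⊆ ℝ³` be open and `d : U → ℝ` a `C²` function satisfying the eikonal equation
`‖∇d(x)‖ = 1` on `U`.  If `x ∈ U`, `t ∈ ℝ` and the segment `{x + s∇d(x) : s between 0 and t}`
lies in `U`, then `∇d(x + t∇d(x)) = ∇d(x)` and `d(x + t∇d(x)) = d(x) + t`.  In particular, if
the segment from `x` to `π(x) := x − d(x)∇d(x)` lies in `U`, then `d(π(x)) = 0`,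
`∇d(π(x)) = ∇d(x)`, and `x = π(x) + d(x)·∇d(π(x))`. -/
theorem stmt_4 (U : Set E3) (hU : IsOpen U) (d : E3 → ℝ)
    (hd : ContDiffOn ℝ 2 d U) (heik : ∀ x ∈ U, ‖gradient d x‖ = 1) :
    (∀ x ∈ U, ∀ t : ℝ,
        (∀ s ∈ Set.uIcc (0 : ℝ) t, x + s • gradient d x ∈ U) →
        gradient d (x + t • gradient d x) = gradient d x ∧
        d (x + t • gradient d x) = d x + t) ∧
    (∀ x ∈ U,
        (∀ s ∈ Set.uIcc (0 : ℝ) (-(d x)), x + s • gradient d x ∈ U) →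
        d (x - d x • gradient d x) = 0 ∧
        gradient d (x - d x • gradient d x) = gradient d x ∧
        x = (x - d x • gradient d x) + d x • gradient d (x - d x • gradient d x)) := by
  refine ⟨fun x _ t hseg => gradient_eq_and_apply_eq hU hd heik hseg, fun x _ hseg => ?_⟩
  obtain ⟨hgrad, hval⟩ := gradient_eq_and_apply_eq hU hd heik hseg
  rw [neg_smul, ← sub_eq_add_neg] at hgrad hval
  exact ⟨by rw [hval]; ring, hgrad, by rw [hgrad, sub_add_cancel]⟩
end
end

section
/- Let U ⊆ ℝ³ be an open set and let d : U → ℝ be a C² function satisfying the eikonal equation ‖∇d(x)‖ = 1 for all x ∈ U. Define n := ∇d, P := I − n nᵀ, H := ∇²d. For a C¹ vector field u : U → ℝ³ with Jacobian Du, define the surface Jacobian ∇_Γ u := P(Du)P and the surface rate-of-strain tensor E_s(u) := ½(∇_Γ u + (∇_Γ u)ᵀ). Decompose u = Pu + (u·n)n into its tangential part u_T := Pu and normal coordinate u_N := u·n. Then at every point of U: E_s(u) = E_s(u_T) + u_N·H. -/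
noncomputable section
open Matrix

/-- View a point of `ℝ³` as a plain coordinate vector. -/
def toV (x : E3) : Fin 3 → ℝ := x

/-- View a plain coordinate vector as a point of `ℝ³`. -/
def ofV (v : Fin 3 → ℝ) : E3 := WithLp.toLp 2 v

/-- The Jacobian matrix `Du` of a vector field `u : ℝ³ → ℝ³` at `x`. -/
def jac (u : E3 → E3) (x : E3) : Matrix (Fin 3) (Fin 3) ℝ :=
  Matrix.of fun i j => toV (fderiv ℝ u x (EuclideanSpace.single j (1 : ℝ))) i

/-- The unit normal field `n := ∇d` (as a coordinate vector). -/
def nV (d : E3 → ℝ) (x : E3) : Fin 3 → ℝ := toV (gradient d x)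

/-- The orthogonal projection `P := I − n nᵀ` onto the tangent plane. -/
def Pmat (d : E3 → ℝ) (x : E3) : Matrix (Fin 3) (Fin 3) ℝ :=
  1 - vecMulVec (nV d x) (nV d x)

/-- The Weingarten map `H := ∇²d`, the Hessian of `d`. -/
def Hmat (d : E3 → ℝ) (x : E3) : Matrix (Fin 3) (Fin 3) ℝ :=
  jac (fun y => gradient d y) x

/-- The tangential (surface) gradient `∇_Γ g := P ∇g` of a scalar field. -/
def gradG (d : E3 → ℝ) (g : E3 → ℝ) (x : E3) : Fin 3 → ℝ :=
  Pmat d x *ᵥ toV (gradient g x)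

/-- The surface Jacobian `∇_Γ u := P (Du) P` of a vector field. -/
def jacG (d : E3 → ℝ) (u : E3 → E3) (x : E3) : Matrix (Fin 3) (Fin 3) ℝ :=
  Pmat d x * jac u x * Pmat d x

/-- The surface divergence `div_Γ u := tr(P (Du) P)` of a vector field. -/
def divG (d : E3 → ℝ) (u : E3 → E3) (x : E3) : ℝ := (jacG d u x).trace

/-- The surface rate-of-strain tensor `E_s(u) := ½(∇_Γ u + (∇_Γ u)ᵀ)`. -/
def Es (d : E3 → ℝ) (u : E3 → E3) (x : E3) : Matrix (Fin 3) (Fin 3) ℝ :=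
  (2⁻¹ : ℝ) • (jacG d u x + (jacG d u x)ᵀ)

/-- The scalar surface curl `curl_Γ u := div_Γ(u × n)` of a vector field. -/
def scurlG (d : E3 → ℝ) (u : E3 → E3) (x : E3) : ℝ :=
  divG d (fun y => ofV (crossProduct (toV (u y)) (nV d y))) x

/-- The vector surface curl `𝐜𝐮𝐫𝐥_Γ g := n × ∇_Γ g` of a scalar field. -/
def vcurlG (d : E3 → ℝ) (g : E3 → ℝ) (x : E3) : Fin 3 → ℝ :=
  crossProduct (nV d x) (gradG d g x)

/-- The surface divergence of a matrix field, applied row-wise: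
`div_Γ A := (div_Γ(e₁ᵀA), div_Γ(e₂ᵀA), div_Γ(e₃ᵀA))ᵀ`. -/
def divGmat (d : E3 → ℝ) (A : E3 → Matrix (Fin 3) (Fin 3) ℝ) (x : E3) : Fin 3 → ℝ :=
  fun i => divG d (fun y => ofV (fun j => A y i j)) x

/-! Write `u_T = u - u_N n` with `u_N = ⟪u, ∇d⟫`, so that `D u_T = Du - u_N H - n ⊗ ∇u_N`.
Conjugating by `P` kills `n ⊗ ∇u_N`, because `Pn = 0` for the unit vector `n`, and fixes `H`,
because `H` is symmetric and differentiating `‖∇d‖² = 1` gives `nᵀH = 0`.  Hence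
`∇_Γ u = ∇_Γ u_T + u_N H`, and symmetrizing gives the identity. -/

open InnerProductSpace Filter Topology

section Projection

variable {ι α : Type*} [Fintype ι] [DecidableEq ι] [CommRing α] {n : ι → α}

lemma one_sub_vecMulVec_mul_vecMulVec (hn : n ⬝ᵥ n = 1) (q : ι → α) :
    (1 - vecMulVec n n) * vecMulVec n q = 0 := by
  rw [sub_mul, one_mul, vecMulVec_mul_vecMulVec, hn, one_smul, sub_self]

lemma one_sub_vecMulVec_mul_mul_one_sub_vecMulVec {H : Matrix ι ι α} (hH : Hᵀ = H)
    (hnH : n ᵥ* H = 0) : (1 - vecMulVec n n) * H * (1 - vecMulVec n n) = H := by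
  have hHn : H * vecMulVec n n = 0 := by
    rw [mul_vecMulVec, ← vecMul_transpose, hH, hnH, zero_vecMulVec]
  rw [sub_mul, one_mul, vecMulVec_mul, hnH, vecMulVec_zero, sub_zero, mul_sub, mul_one, hHn,
    sub_zero]

lemma one_sub_vecMulVec_mul_sub_mul_one_sub_vecMulVec (hn : n ⬝ᵥ n = 1) {H : Matrix ι ι α}
    (hH : Hᵀ = H) (hnH : n ᵥ* H = 0) (A : Matrix ι ι α) (c : α) (q : ι → α) :
    (1 - vecMulVec n n) * (A - (c • H + vecMulVec n q)) * (1 - vecMulVec n n)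
      = (1 - vecMulVec n n) * A * (1 - vecMulVec n n) - c • H := by
  set P := 1 - vecMulVec n n
  rw [mul_sub P, sub_mul _ _ P, mul_add P, add_mul _ _ P, Matrix.mul_smul, Matrix.smul_mul,
    one_sub_vecMulVec_mul_mul_one_sub_vecMulVec hH hnH, one_sub_vecMulVec_mul_vecMulVec hn,
    zero_mul, add_zero]

end Projection

lemma dotProduct_toV (a b : E3) : toV a ⬝ᵥ toV b = ⟪a, b⟫_ℝ := by
  simp [toV, dotProduct, PiLp.inner_apply, mul_comm]

lemma ofV_Pmat_mulVec (d : E3 → ℝ) (y v : E3) :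
    ofV (Pmat d y *ᵥ toV v) = v - ⟪v, gradient d y⟫_ℝ • gradient d y := by
  ext i
  rw [ofV, Pmat, sub_mulVec, one_mulVec, vecMulVec_mulVec, nV, dotProduct_comm, dotProduct_toV]
  simp [toV]

lemma toV_toDual_symm_apply (φ : E3 →L[ℝ] ℝ) (j : Fin 3) :
    toV ((toDual ℝ E3).symm φ) j = φ (EuclideanSpace.single j 1) := by
  rw [← toDual_symm_apply (𝕜 := ℝ) (x := EuclideanSpace.single j 1),
    EuclideanSpace.inner_single_right]
  simp [toV]

section Jacobian

variable {u v : E3 → E3} {g : E3 → ℝ} {x : E3}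

lemma jac_sub (hu : DifferentiableAt ℝ u x) (hv : DifferentiableAt ℝ v x) :
    jac (fun y => u y - v y) x = jac u x - jac v x := by
  ext i j
  simp [jac, fderiv_fun_sub hu hv, toV]

lemma jac_smul (hg : DifferentiableAt ℝ g x) (hv : DifferentiableAt ℝ v x) :
    jac (fun y => g y • v y) x
      = g x • jac v x + vecMulVec (toV (v x)) (toV (gradient g x)) := by
  ext i j
  rw [Matrix.add_apply, vecMulVec_apply, gradient, toV_toDual_symm_apply]
  simp [jac, fderiv_fun_smul hg hv, toV, mul_comm]

end Jacobian

section Gradient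

variable {F : Type*} [NormedAddCommGroup F] [InnerProductSpace ℝ F] [CompleteSpace F]

lemma ContDiffAt.differentiableAt_gradient {d : F → ℝ} {x : F} (hd : ContDiffAt ℝ 2 d x) :
    DifferentiableAt ℝ (gradient d) x :=
  (toDual ℝ F).symm.differentiable.differentiableAt.comp x
    ((hd.fderiv_right (m := 1) (by norm_num)).differentiableAt one_ne_zero)

lemma fderiv_gradient (d : F → ℝ) (x v : F) :
    fderiv ℝ (gradient d) x v = (toDual ℝ F).symm (fderiv ℝ (fderiv ℝ d) x v) := by
  change fderiv ℝ ((toDual ℝ F).symm ∘ fderiv ℝ d) x v = _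
  rw [LinearIsometryEquiv.comp_fderiv]
  rfl

end Gradient

lemma Hmat_apply (d : E3 → ℝ) (x : E3) (i j : Fin 3) :
    Hmat d x i j
      = fderiv ℝ (fderiv ℝ d) x (EuclideanSpace.single j 1) (EuclideanSpace.single i 1) := by
  rw [Hmat, jac, of_apply, fderiv_gradient, toV_toDual_symm_apply]

lemma Hmat_transpose {d : E3 → ℝ} {x : E3} (hd : ContDiffAt ℝ 2 d x) :
    (Hmat d x)ᵀ = Hmat d x := by
  ext i j
  rw [transpose_apply, Hmat_apply, Hmat_apply]
  exact hd.isSymmSndFDerivAt (by simp [minSmoothness_of_isRCLikeNormedField]) _ _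

lemma vecMul_nV_Hmat {d : E3 → ℝ} {x : E3} (hg : DifferentiableAt ℝ (gradient d) x) {c : ℝ}
    (hc : ∀ᶠ y in 𝓝 x, ‖gradient d y‖ = c) : nV d x ᵥ* Hmat d x = 0 := by
  have hconst : (fun y => ⟪gradient d y, gradient d y⟫_ℝ) =ᶠ[𝓝 x] fun _ => c ^ 2 := by
    filter_upwards [hc] with y hy
    rw [real_inner_self_eq_norm_sq, hy]
  ext j
  have h0 := DFunLike.congr_fun (hconst.fderiv_eq (𝕜 := ℝ)) (EuclideanSpace.single j 1)
  rw [fderiv_inner_apply ℝ hg hg, fderiv_const_apply, _root_.zero_apply,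
    real_inner_comm] at h0
  have hcol : (nV d x ᵥ* Hmat d x) j
      = ⟪fderiv ℝ (gradient d) x (EuclideanSpace.single j 1), gradient d x⟫_ℝ := by
    rw [real_inner_comm, ← dotProduct_toV]
    rfl
  simp only [hcol, Pi.zero_apply]
  linarith

lemma nV_dotProduct_nV {d : E3 → ℝ} {x : E3} (h : ‖gradient d x‖ = 1) :
    nV d x ⬝ᵥ nV d x = 1 := by
  rw [nV, dotProduct_toV, real_inner_self_eq_norm_sq, h, one_pow]

lemma jacG_eq_jacG_tangential_add {d : E3 → ℝ} {u : E3 → E3} {x : E3}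
    (hd : ContDiffAt ℝ 2 d x) (hu : DifferentiableAt ℝ u x)
    (heik : ∀ᶠ y in 𝓝 x, ‖gradient d y‖ = 1) :
    jacG d u x = jacG d (fun y => ofV (Pmat d y *ᵥ toV (u y))) x
      + ⟪u x, gradient d x⟫_ℝ • Hmat d x := by
  have hn : DifferentiableAt ℝ (gradient d) x := hd.differentiableAt_gradient
  have huN : DifferentiableAt ℝ (fun y => ⟪u y, gradient d y⟫_ℝ) x := hu.inner ℝ hn
  have hjac : jac (fun y => ofV (Pmat d y *ᵥ toV (u y))) x
      = jac u x - (⟪u x, gradient d x⟫_ℝ • Hmat d x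
        + vecMulVec (nV d x) (toV (gradient (fun y => ⟪u y, gradient d y⟫_ℝ) x))) := by
    simp_rw [ofV_Pmat_mulVec]
    rw [jac_sub hu (huN.fun_smul hn), jac_smul huN hn]
    rfl
  rw [jacG, jacG, hjac, Pmat, one_sub_vecMulVec_mul_sub_mul_one_sub_vecMulVec
    (nV_dotProduct_nV heik.self_of_nhds) (Hmat_transpose hd) (vecMul_nV_Hmat hn heik),
    sub_add_cancel]

/-- Let `U ⊆ ℝ³` be open and `d : U → ℝ` a `C²` function satisfying the eikonal equation
`‖∇d(x)‖ = 1` on `U`, with `n := ∇d`, `P := I − nnᵀ`, `H := ∇²d`.  For a `C¹` vector field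
`u : U → ℝ³`, decomposed as `u = u_T + u_N n` with tangential part `u_T := Pu` and normal
coordinate `u_N := u·n`, the surface rate-of-strain tensor satisfies, at every point of `U`,
`E_s(u) = E_s(u_T) + u_N · H`. -/
theorem stmt_6 (U : Set E3) (hU : IsOpen U) (d : E3 → ℝ)
    (hd : ContDiffOn ℝ 2 d U) (heik : ∀ x ∈ U, ‖gradient d x‖ = 1)
    (u : E3 → E3) (hu : ContDiffOn ℝ 1 u U)
    (x : E3) (hx : x ∈ U) :
    Es d u x
      = Es d (fun y => ofV (Pmat d y *ᵥ toV (u y))) x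
        + (toV (u x) ⬝ᵥ nV d x) • Hmat d x := by
  have hxU : U ∈ 𝓝 x := hU.mem_nhds hx
  have hd2 : ContDiffAt ℝ 2 d x := hd.contDiffAt hxU
  have hu1 : DifferentiableAt ℝ u x := (hu.contDiffAt hxU).differentiableAt one_ne_zero
  rw [Es, Es, jacG_eq_jacG_tangential_add hd2 hu1 (eventually_of_mem hxU heik), nV,
    dotProduct_toV, transpose_add, transpose_smul, Hmat_transpose hd2]
  module
end
end
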